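/- Let d ≠ 0 and f ∈ ℝ. For each t ∈ (-1,1), setting â₁(t) = f(1-t²), â₂(t) = -f t √(1-t²), and ζ̂(t) = f²(1-t²) + t/√(1-t²), the pair (â₁(t), â₂(t)) is a constant solution of the stationary Lugiato-Lefever system with detuning parameter ζ = ζ̂(t). Conversely, every constant solution (a₁, a₂, ζ) ∈ ℝ³ of the system with forcing f arises in this way for some t ∈ (-1,1). -/

import Mathlib

open Real

/-
Put μ := ζ - (a₁² + a₂²). The system then reads a₂ = -μ a₁ and a₁ (1 + μ²) = f, so the constant
solutions form the curve μ ↦ (f / (1 + μ²), -μ f / (1 + μ²), μ + f² / (1 + μ²)), μ ∈ ℝ. The t-form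
is this curve reparametrized by t = μ / √(1 + μ²), a bijection ℝ → (-1, 1) with inverse
μ = t / √(1 - t²), under which 1 - t² = 1 / (1 + μ²).
-/

def IsConstantSolution (f a₁ a₂ ζ : ℝ) : Prop :=
  a₂ + ζ * a₁ - (a₁ ^ 2 + a₂ ^ 2) * a₁ = 0 ∧ a₁ - ζ * a₂ + (a₁ ^ 2 + a₂ ^ 2) * a₂ - f = 0

theorem isConstantSolution_iff_exists (f a₁ a₂ ζ : ℝ) :
    IsConstantSolution f a₁ a₂ ζ ↔
      ∃ μ : ℝ, a₁ * (1 + μ ^ 2) = f ∧ a₂ = -μ * a₁ ∧ ζ = μ + (a₁ ^ 2 + a₂ ^ 2) := by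
  constructor
  · rintro ⟨h₁, h₂⟩
    have ha₂ : a₂ = -(ζ - (a₁ ^ 2 + a₂ ^ 2)) * a₁ := by linear_combination h₁
    refine ⟨ζ - (a₁ ^ 2 + a₂ ^ 2), ?_, ha₂, by ring⟩
    linear_combination h₂ + (ζ - (a₁ ^ 2 + a₂ ^ 2)) * ha₂
  · rintro ⟨μ, ha₁, rfl, rfl⟩
    exact ⟨by ring, by linear_combination ha₁⟩

theorem one_add_sq_div_sqrt_one_sub_sq {t : ℝ} (ht : t ^ 2 < 1) :
    1 + (t / √(1 - t ^ 2)) ^ 2 = (1 - t ^ 2)⁻¹ := by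
  have hpos : 0 < 1 - t ^ 2 := sub_pos.2 ht
  rw [div_pow, sq_sqrt hpos.le]
  field_simp
  ring

theorem one_sub_sq_div_sqrt_one_add_sq (μ : ℝ) :
    1 - (μ / √(1 + μ ^ 2)) ^ 2 = (1 + μ ^ 2)⁻¹ := by
  have hpos : 0 < 1 + μ ^ 2 := by positivity
  rw [div_pow, sq_sqrt hpos.le]
  field_simp
  ring

theorem sqrt_one_sub_sq_div_sqrt_one_add_sq (μ : ℝ) :
    √(1 - (μ / √(1 + μ ^ 2)) ^ 2) = (√(1 + μ ^ 2))⁻¹ := by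
  rw [one_sub_sq_div_sqrt_one_add_sq, sqrt_inv]

theorem div_sqrt_one_add_sq_mem_Ioo (μ : ℝ) : μ / √(1 + μ ^ 2) ∈ Set.Ioo (-1 : ℝ) 1 := by
  have hpos : 0 < (1 + μ ^ 2)⁻¹ := by positivity
  rw [← one_sub_sq_div_sqrt_one_add_sq, sub_pos, sq_lt_one_iff_abs_lt_one] at hpos
  exact abs_lt.1 hpos

theorem isConstantSolution_of_mem_Ioo (f : ℝ) {t : ℝ} (ht : t ∈ Set.Ioo (-1 : ℝ) 1) :
    IsConstantSolution f (f * (1 - t ^ 2)) (-f * t * √(1 - t ^ 2))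
      (f ^ 2 * (1 - t ^ 2) + t / √(1 - t ^ 2)) := by
  have ht' : t ^ 2 < 1 := (sq_lt_one_iff_abs_lt_one t).2 (abs_lt.2 ht)
  have hpos : 0 < 1 - t ^ 2 := sub_pos.2 ht'
  have hs : √(1 - t ^ 2) ^ 2 = 1 - t ^ 2 := sq_sqrt hpos.le
  refine (isConstantSolution_iff_exists _ _ _ _).2 ⟨t / √(1 - t ^ 2), ?_, ?_, ?_⟩
  · rw [one_add_sq_div_sqrt_one_sub_sq ht', mul_assoc, mul_inv_cancel₀ hpos.ne', mul_one]
  · field_simp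
    linear_combination (-f * t) * hs
  · field_simp
    linear_combination (-f ^ 2 * t ^ 2 * √(1 - t ^ 2)) * hs

theorem exists_mem_Ioo_of_isConstantSolution {f a₁ a₂ ζ : ℝ} (h : IsConstantSolution f a₁ a₂ ζ) :
    ∃ t ∈ Set.Ioo (-1 : ℝ) 1,
      a₁ = f * (1 - t ^ 2) ∧ a₂ = -f * t * √(1 - t ^ 2) ∧
      ζ = f ^ 2 * (1 - t ^ 2) + t / √(1 - t ^ 2) := by
  obtain ⟨μ, ha₁, rfl, rfl⟩ := (isConstantSolution_iff_exists f a₁ a₂ ζ).1 h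
  have hS : √(1 + μ ^ 2) ^ 2 = 1 + μ ^ 2 := sq_sqrt (by positivity)
  refine ⟨μ / √(1 + μ ^ 2), div_sqrt_one_add_sq_mem_Ioo μ, ?_, ?_, ?_⟩
  · rw [one_sub_sq_div_sqrt_one_add_sq]
    field_simp
    exact ha₁
  · rw [sqrt_one_sub_sq_div_sqrt_one_add_sq]
    field_simp
    rw [hS]
    linear_combination (-μ) * ha₁
  · rw [sqrt_one_sub_sq_div_sqrt_one_add_sq, one_sub_sq_div_sqrt_one_add_sq]
    field_simp
    linear_combination (a₁ * (1 + μ ^ 2) + f) * ha₁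

theorem stmt_7 (f : ℝ) :
    (∀ t ∈ Set.Ioo (-1 : ℝ) 1,
      let a1 := f * (1 - t ^ 2)
      let a2 := -f * t * Real.sqrt (1 - t ^ 2)
      let ζ := f ^ 2 * (1 - t ^ 2) + t / Real.sqrt (1 - t ^ 2)
      a2 + ζ * a1 - (a1 ^ 2 + a2 ^ 2) * a1 = 0 ∧
      a1 - ζ * a2 + (a1 ^ 2 + a2 ^ 2) * a2 - f = 0) ∧
    (∀ a1 a2 ζ : ℝ,
      a2 + ζ * a1 - (a1 ^ 2 + a2 ^ 2) * a1 = 0 →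
      a1 - ζ * a2 + (a1 ^ 2 + a2 ^ 2) * a2 - f = 0 →
      ∃ t ∈ Set.Ioo (-1 : ℝ) 1,
        a1 = f * (1 - t ^ 2) ∧
        a2 = -f * t * Real.sqrt (1 - t ^ 2) ∧
        ζ = f ^ 2 * (1 - t ^ 2) + t / Real.sqrt (1 - t ^ 2)) :=
  ⟨fun _ ht => isConstantSolution_of_mem_Ioo f ht,
    fun _ _ _ h₁ h₂ => exists_mem_Ioo_of_isConstantSolution ⟨h₁, h₂⟩⟩
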